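/- The first Taylor coefficient of log((s−1)·ζ(s)) in the variable z = 1 − 1/s at z = 0 equals the Euler–Mascheroni constant γ; equivalently, the derivative at s = 1 of s ↦ log((s−1)·ζ(s)) equals γ, i.e. lim_{s→1} (ζ'(s)/ζ(s) + 1/(s−1)) = γ. -/

import Mathlib

/-!
Near its simple pole at `1`, `ζ s = 1 / (s - 1) + γ + o(1)`, so `(s - 1) ζ s` extends to a
function `G` that is holomorphic at `1` with `G 1 = 1` and `G' 1 = γ`. Away from `1`,
`G' / G = ζ' / ζ + 1 / (s - 1)`, and the logarithmic derivative of `G` is continuous at `1`.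
-/

open Filter Topology Function

/-- When `f` has a simple pole at `a` with residue `c`, this is the holomorphic extension of
`(s - a) * f s` across `a`. -/
noncomputable def removePole (f : ℂ → ℂ) (a c : ℂ) : ℂ → ℂ :=
  update (fun s ↦ (s - a) * f s) a c

section removePole

variable {f : ℂ → ℂ} {a c d s : ℂ}

lemma removePole_eventuallyEq (hs : s ≠ a) :
    removePole f a c =ᶠ[𝓝 s] fun t ↦ (t - a) * f t := by
  filter_upwards [compl_singleton_mem_nhds hs] with t ht
  exact update_of_ne ht _ _

lemma hasDerivAt_removePole (hf : Tendsto (fun s ↦ f s - c / (s - a)) (𝓝[≠] a) (𝓝 d)) :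
    HasDerivAt (removePole f a c) d a := by
  rw [hasDerivAt_iff_tendsto_slope]
  refine hf.congr' ?_
  filter_upwards [self_mem_nhdsWithin] with s (hs : s ≠ a)
  have hsa : s - a ≠ 0 := sub_ne_zero.mpr hs
  rw [slope_def_field, removePole, update_of_ne hs, update_self]
  field_simp

lemma analyticAt_removePole (hd : ∀ᶠ s in 𝓝[≠] a, DifferentiableAt ℂ f s)
    (hf : Tendsto (fun s ↦ f s - c / (s - a)) (𝓝[≠] a) (𝓝 d)) :
    AnalyticAt ℂ (removePole f a c) a := by
  refine Complex.analyticAt_of_differentiable_on_punctured_nhds_of_continuousAt ?_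
    (hasDerivAt_removePole hf).continuousAt
  filter_upwards [self_mem_nhdsWithin, hd] with s (hs : s ≠ a) hfs
  exact ((differentiableAt_id.sub_const a).mul hfs).congr_of_eventuallyEq
    (removePole_eventuallyEq hs)

lemma logDeriv_removePole (hs : s ≠ a) (hfs : f s ≠ 0) (hd : DifferentiableAt ℂ f s) :
    logDeriv (removePole f a c) s = logDeriv f s + 1 / (s - a) := by
  have hsa : s - a ≠ 0 := sub_ne_zero.mpr hs
  rw [logDeriv_apply, (removePole_eventuallyEq hs).deriv_eq,
    (removePole_eventuallyEq hs).eq_of_nhds, ← logDeriv_apply,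
    logDeriv_mul (f := (· - a)) s hsa hfs (by fun_prop) hd, add_comm]
  simp [logDeriv_apply]

theorem tendsto_logDeriv_add_one_div_sub (hd : ∀ᶠ s in 𝓝[≠] a, DifferentiableAt ℂ f s)
    (hf : Tendsto (fun s ↦ f s - c / (s - a)) (𝓝[≠] a) (𝓝 d)) (hc : c ≠ 0) :
    Tendsto (fun s ↦ logDeriv f s + 1 / (s - a)) (𝓝[≠] a) (𝓝 (d / c)) := by
  have hG := analyticAt_removePole hd hf
  have hGa : removePole f a c a = c := update_self _ _ _
  have hlog : Tendsto (logDeriv (removePole f a c)) (𝓝[≠] a) (𝓝 (d / c)) := by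
    have hcont : ContinuousAt (logDeriv (removePole f a c)) a :=
      hG.deriv.continuousAt.div hG.continuousAt (by rwa [hGa])
    rw [ContinuousAt, logDeriv_apply, hGa, (hasDerivAt_removePole hf).deriv] at hcont
    exact hcont.mono_left nhdsWithin_le_nhds
  have hG_ne : ∀ᶠ s in 𝓝[≠] a, removePole f a c s ≠ 0 :=
    hG.continuousAt.eventually_ne (by rwa [hGa]) |>.filter_mono nhdsWithin_le_nhds
  refine hlog.congr' ?_
  filter_upwards [self_mem_nhdsWithin, hd, hG_ne] with s (hs : s ≠ a) hds hGs
  have hfs : f s ≠ 0 := by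
    rw [removePole, update_of_ne hs] at hGs
    exact right_ne_zero_of_mul hGs
  exact logDeriv_removePole hs hfs hds

end removePole

theorem stmt_8 :
    Filter.Tendsto
      (fun s : ℂ => deriv riemannZeta s / riemannZeta s + 1 / (s - 1))
      (nhdsWithin 1 {(1 : ℂ)}ᶜ)
      (nhds ((Real.eulerMascheroniConstant : ℝ) : ℂ)) := by
  have hd : ∀ᶠ s in 𝓝[≠] (1 : ℂ), DifferentiableAt ℂ riemannZeta s :=
    eventually_nhdsWithin_of_forall fun _ hs ↦ differentiableAt_riemannZeta hs
  simpa only [logDeriv_apply, div_one] using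
    tendsto_logDeriv_add_one_div_sub hd tendsto_riemannZeta_sub_one_div one_ne_zero
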